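/- arXiv:1308.5152 — 3 statements merged into one kernel-verified Lean document; each statement's English description precedes it below -/
import Mathlib

section
/- The reachability probability v(x) = P_x(τ_A < ∞) is the least non-negative solution of the fixpoint equation f(x) = 1_A(x) + 1_{A^c}(x)·∫_E f(y) P(x,dy): for any measurable f ≥ 0 satisfying this equation, v(x) ≤ f(x) for all x ∈ E. -/
/-!
Only the law `ν^ℕ` of the noise sequence matters, so we work on the canonical space `ℕ → Ξ`.
There head and tail are independent and the tail is again `ν^ℕ`-distributed, so
`ν^ℕ = ν ⊗ ν^ℕ` after splitting off the first coordinate. Hence the probability of hitting `A`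
within `n` steps obeys the recursion of the fixpoint equation, and induction on `n` bounds it by
any non-negative supersolution; `v` is its limit as `n → ∞`.
-/

open MeasureTheory ProbabilityTheory Filter

noncomputable section

/-- Trajectory of the Markov process with update map `F` driven by the noise sequence `ξ`,
started at `x`. -/
def traj {E Ξ Ω : Type*} (F : E → Ξ → E) (ξ : ℕ → Ω → Ξ) (x : E) (ω : Ω) : ℕ → E
  | 0 => x
  | n + 1 => F (traj F ξ x ω n) (ξ n ω)

section Independence

variable {Ω Ξ : Type*} [MeasurableSpace Ω] [MeasurableSpace Ξ] {μ : Measure Ω}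

theorem ProbabilityTheory.iIndepFun.indepFun_head_tail {X : ℕ → Ω → Ξ}
    (hX : ∀ n, Measurable (X n)) (h : iIndepFun X μ) :
    IndepFun (X 0) (fun ω j => X (j + 1) ω) μ := by
  have hST : Disjoint ({0} : Set ℕ) (Set.range Nat.succ) := by simp
  have h_indep := indep_iSup_of_disjoint (fun n => (hX n).comap_le) h.iIndep hST
  rw [IndepFun_iff_Indep]
  refine indep_of_indep_of_le_right (indep_of_indep_of_le_left h_indep ?_) ?_
  · exact le_iSup₂_of_le (f := fun i (_ : i ∈ ({0} : Set ℕ)) => _) 0 rfl le_rfl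
  · simp_rw [MeasurableSpace.pi, MeasurableSpace.comap_iSup, MeasurableSpace.comap_comp]
    exact iSup_le fun j =>
      le_iSup₂_of_le (f := fun i (_ : i ∈ Set.range Nat.succ) => _) (j + 1) ⟨j, rfl⟩ le_rfl

theorem ProbabilityTheory.iIndepFun.map_fun_eq_infinitePi_of_identDistrib [IsProbabilityMeasure μ]
    {X : ℕ → Ω → Ξ} (hX : ∀ n, Measurable (X n)) (h : iIndepFun X μ)
    (hid : ∀ n, IdentDistrib (X n) (X 0) μ μ) :
    μ.map (fun ω j => X j ω) = Measure.infinitePi fun _ => μ.map (X 0) := by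
  rw [h.map_fun_eq_infinitePi_map hX]
  exact congrArg Measure.infinitePi (funext fun j => (hid j).map_eq)

end Independence

theorem MeasureTheory.Measure.infinitePi_map_head_tail {Ξ : Type*} [MeasurableSpace Ξ]
    (ν : Measure Ξ) [IsProbabilityMeasure ν] :
    (infinitePi fun _ : ℕ => ν).map (fun u => (u 0, fun j => u (j + 1)))
      = ν.prod (infinitePi fun _ : ℕ => ν) := by
  have h_indep :
      IndepFun (fun u : ℕ → Ξ => u 0) (fun u j => u (j + 1)) (infinitePi fun _ => ν) :=
    (iIndepFun_infinitePi (X := fun _ => id) fun _ => measurable_id).indepFun_head_tail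
      fun n => measurable_pi_apply n
  rw [(indepFun_iff_map_prod_eq_prod_map_map (measurable_pi_apply 0).aemeasurable
    (measurable_pi_lambda _ fun j => measurable_pi_apply (j + 1)).aemeasurable).1 h_indep,
    infinitePi_map_eval, map_infinitePi_infinitePi_of_inj (f := Nat.succ) Nat.succ_injective]

section Trajectory

variable {E Ξ Ω : Type*}

theorem traj_eq_traj_seq (F : E → Ξ → E) (ξ : ℕ → Ω → Ξ) (x : E) (ω : Ω) :
    ∀ k, traj F ξ x ω k = traj F (fun j u => u j) x (fun j => ξ j ω) k
  | 0 => rfl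
  | k + 1 => by rw [traj, traj, traj_eq_traj_seq F ξ x ω k]

theorem traj_seq_succ (F : E → Ξ → E) (x : E) (u : ℕ → Ξ) :
    ∀ k, traj F (fun j u => u j) x u (k + 1)
      = traj F (fun j u => u j) (F x (u 0)) (fun j => u (j + 1)) k
  | 0 => rfl
  | k + 1 => by rw [traj, traj_seq_succ F x u k]; rfl

theorem measurable_traj_seq [MeasurableSpace E] [MeasurableSpace Ξ] {F : E → Ξ → E}
    (hF : Measurable (Function.uncurry F)) (k : ℕ) :
    Measurable fun p : E × (ℕ → Ξ) => traj F (fun j u => u j) p.1 p.2 k := by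
  induction k with
  | zero => exact measurable_fst
  | succ k ih => exact hF.comp (ih.prodMk ((measurable_pi_apply k).comp measurable_snd))

/-- The event `{τ_A < n}` for the chain started at `x`, realised on the canonical space of noise
sequences (the noise at time `j` is the coordinate `u j`). -/
def hitBefore (F : E → Ξ → E) (A : Set E) (x : E) (n : ℕ) : Set (ℕ → Ξ) :=
  {u | ∃ k < n, traj F (fun j u => u j) x u k ∈ A}

/-- The event `{τ_A < ∞}`, on the same space. -/
def hitEventually (F : E → Ξ → E) (A : Set E) (x : E) : Set (ℕ → Ξ) :=
  {u | ∃ k, traj F (fun j u => u j) x u k ∈ A}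

theorem hitBefore_succ_of_notMem (F : E → Ξ → E) {A : Set E} {x : E} (hx : x ∉ A) (n : ℕ) :
    hitBefore F A x (n + 1)
      = (fun u => (u 0, fun j => u (j + 1))) ⁻¹' {p | p.2 ∈ hitBefore F A (F x p.1) n} := by
  ext u
  simp only [hitBefore, Set.mem_preimage, Set.mem_ofPred_eq]
  constructor
  · rintro ⟨_ | k, hk, hkA⟩
    · exact absurd hkA hx
    · exact ⟨k, by omega, by rwa [← traj_seq_succ]⟩
  · rintro ⟨k, hk, hkA⟩
    exact ⟨k + 1, by omega, by rwa [traj_seq_succ]⟩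

theorem measurableSet_hitBefore [MeasurableSpace E] [MeasurableSpace Ξ] {F : E → Ξ → E}
    (hF : Measurable (Function.uncurry F)) {A : Set E} (hA : MeasurableSet A) (n : ℕ) :
    MeasurableSet {p : E × (ℕ → Ξ) | p.2 ∈ hitBefore F A p.1 n} := by
  refine measurableSet_setOfPred.2 (Measurable.exists fun k => ?_)
  exact measurable_const.and (hA.mem.comp (measurable_traj_seq hF k))

theorem hitEventually_eq_iUnion_hitBefore (F : E → Ξ → E) (A : Set E) (x : E) :
    hitEventually F A x = ⋃ n, hitBefore F A x n := by
  ext u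
  simp only [hitEventually, hitBefore, Set.mem_ofPred_eq, Set.mem_iUnion]
  exact ⟨fun ⟨k, hk⟩ => ⟨k + 1, k, k.lt_succ_self, hk⟩, fun ⟨_, k, _, hk⟩ => ⟨k, hk⟩⟩

theorem monotone_hitBefore (F : E → Ξ → E) (A : Set E) (x : E) :
    Monotone (hitBefore F A x) := fun _ _ hmn _ ⟨k, hk, hkA⟩ => ⟨k, hk.trans_le hmn, hkA⟩

theorem measurableSet_hitEventually [MeasurableSpace E] [MeasurableSpace Ξ] {F : E → Ξ → E}
    (hF : Measurable (Function.uncurry F)) {A : Set E} (hA : MeasurableSet A) (x : E) :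
    MeasurableSet (hitEventually F A x) :=
  measurableSet_setOfPred.2 <| .exists fun k =>
    hA.mem.comp ((measurable_traj_seq hF k).comp measurable_prodMk_left)

theorem measure_setOf_exists_traj_mem [MeasurableSpace E] [MeasurableSpace Ξ] [MeasurableSpace Ω]
    {μ : Measure Ω} {ξ : ℕ → Ω → Ξ} (hξ : ∀ n, Measurable (ξ n)) {F : E → Ξ → E}
    (hF : Measurable (Function.uncurry F)) {A : Set E} (hA : MeasurableSet A) (x : E) :
    μ {ω | ∃ k, traj F ξ x ω k ∈ A} = μ.map (fun ω j => ξ j ω) (hitEventually F A x) := by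
  rw [Measure.map_apply (measurable_pi_lambda _ hξ) (measurableSet_hitEventually hF hA x)]
  simp_rw [traj_eq_traj_seq]
  rfl

end Trajectory

section Reachability

open scoped ENNReal

variable {E Ξ : Type*} [MeasurableSpace E] [MeasurableSpace Ξ] {F : E → Ξ → E} {A : Set E}
  {ν : Measure Ξ} [IsProbabilityMeasure ν] {g : E → ℝ≥0∞}

theorem infinitePi_hitBefore_le (hF : Measurable (Function.uncurry F)) (hA : MeasurableSet A)
    (hgA : ∀ x ∈ A, 1 ≤ g x) (hg : ∀ x ∉ A, ∫⁻ a, g (F x a) ∂ν ≤ g x) (n : ℕ) (x : E) :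
    Measure.infinitePi (fun _ : ℕ => ν) (hitBefore F A x n) ≤ g x := by
  induction n generalizing x with
  | zero => simp [hitBefore]
  | succ n ih =>
    by_cases hx : x ∈ A
    · exact prob_le_one.trans (hgA x hx)
    have hS : MeasurableSet {p : Ξ × (ℕ → Ξ) | p.2 ∈ hitBefore F A (F x p.1) n} :=
      measurableSet_hitBefore hF hA n
        |>.preimage ((hF.comp (measurable_const.prodMk measurable_fst)).prodMk measurable_snd)
    calc Measure.infinitePi (fun _ => ν) (hitBefore F A x (n + 1))
        = (ν.prod (Measure.infinitePi fun _ => ν)) {p | p.2 ∈ hitBefore F A (F x p.1) n} := by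
          rw [hitBefore_succ_of_notMem F hx, ← Measure.infinitePi_map_head_tail,
            Measure.map_apply (by fun_prop) hS]
      _ = ∫⁻ a, Measure.infinitePi (fun _ => ν) (hitBefore F A (F x a) n) ∂ν :=
          Measure.prod_apply hS
      _ ≤ ∫⁻ a, g (F x a) ∂ν := lintegral_mono fun a => ih (F x a)
      _ ≤ g x := hg x hx

theorem infinitePi_hitEventually_le (hF : Measurable (Function.uncurry F)) (hA : MeasurableSet A)
    (hgA : ∀ x ∈ A, 1 ≤ g x) (hg : ∀ x ∉ A, ∫⁻ a, g (F x a) ∂ν ≤ g x) (x : E) :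
    Measure.infinitePi (fun _ : ℕ => ν) (hitEventually F A x) ≤ g x := by
  rw [hitEventually_eq_iUnion_hitBefore, (monotone_hitBefore F A x).measure_iUnion]
  exact iSup_le fun n => infinitePi_hitBefore_le hF hA hgA hg n x

end Reachability

theorem stmt_4_general
    {E Ξ Ω : Type*} [MeasurableSpace E]
    [MeasurableSpace Ξ] [MeasurableSpace Ω]
    (μ : Measure Ω) [IsProbabilityMeasure μ]
    (ξ : ℕ → Ω → Ξ) (hξmeas : ∀ n, Measurable (ξ n))
    (hξindep : iIndepFun ξ μ)
    (hξid : ∀ n, IdentDistrib (ξ n) (ξ 0) μ μ)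
    (F : E → Ξ → E) (hF : Measurable (Function.uncurry F))
    (P : Kernel E E)
    (hP : ∀ x, P x = μ.map (fun ω => F x (ξ 0 ω)))
    (A : Set E) (hA : MeasurableSet A)
    (v : E → ℝ)
    (hv : ∀ x, v x = (μ {ω | ∃ k, traj F ξ x ω k ∈ A}).toReal)
    -- a bounded measurable non-negative solution of the fixpoint equation
    (f : E → ℝ) (hfm : Measurable f) (hf0 : ∀ x, 0 ≤ f x)
    (hfb : ∃ C, ∀ x, |f x| ≤ C)
    (hffix : ∀ x, f x = A.indicator 1 x + Aᶜ.indicator 1 x * ∫ y, f y ∂(P x)) :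
    ∀ x, v x ≤ f x := by
  intro x
  set ν := μ.map (ξ 0)
  have : IsProbabilityMeasure ν := Measure.isProbabilityMeasure_map (hξmeas 0).aemeasurable
  have hfA : ∀ y ∈ A, 1 ≤ ENNReal.ofReal (f y) := fun y hy => by simp [hffix y, hy]
  have hfP : ∀ y ∉ A, ∫⁻ a, ENNReal.ofReal (f (F y a)) ∂ν ≤ ENNReal.ofReal (f y) := by
    intro y hy
    obtain ⟨C, hC⟩ := hfb
    have hFy : Measurable (F y) := hF.comp measurable_prodMk_left
    have hPy : P y = ν.map (F y) := by rw [hP, Measure.map_map hFy (hξmeas 0)]; rfl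
    have : IsProbabilityMeasure (P y) := by
      rw [hPy]; exact Measure.isProbabilityMeasure_map hFy.aemeasurable
    have hint : Integrable f (P y) := .of_bound hfm.aestronglyMeasurable C (ae_of_all _ hC)
    refine le_of_eq ?_
    calc ∫⁻ a, ENNReal.ofReal (f (F y a)) ∂ν = ∫⁻ z, ENNReal.ofReal (f z) ∂(P y) := by
          rw [hPy, lintegral_map hfm.ennreal_ofReal hFy]
      _ = ENNReal.ofReal (∫ z, f z ∂(P y)) :=
          (ofReal_integral_eq_lintegral_ofReal hint (ae_of_all _ hf0)).symm
      _ = ENNReal.ofReal (f y) := by simp [hffix y, hy]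
  rw [hv x, measure_setOf_exists_traj_mem hξmeas hF hA,
    hξindep.map_fun_eq_infinitePi_of_identDistrib hξmeas hξid]
  exact ENNReal.toReal_le_of_le_ofReal (hf0 x) (infinitePi_hitEventually_le hF hA hfA hfP x)

/-- the reachability probability `v x = P_x(τ_A < ∞)` is the least non-negative
solution of the Bellman fixpoint equation. -/
theorem stmt_4
    {E Ξ Ω : Type*} [MeasurableSpace E] [StandardBorelSpace E]
    [MeasurableSpace Ξ] [MeasurableSpace Ω]
    (μ : Measure Ω) [IsProbabilityMeasure μ]
    (ξ : ℕ → Ω → Ξ) (hξmeas : ∀ n, Measurable (ξ n))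
    (hξindep : iIndepFun ξ μ)
    (hξid : ∀ n, IdentDistrib (ξ n) (ξ 0) μ μ)
    (F : E → Ξ → E) (hF : Measurable (Function.uncurry F))
    (P : Kernel E E) [IsMarkovKernel P]
    (hP : ∀ x, P x = μ.map (fun ω => F x (ξ 0 ω)))
    (A : Set E) (hA : MeasurableSet A)
    (v : E → ℝ)
    (hv : ∀ x, v x = (μ {ω | ∃ k, traj F ξ x ω k ∈ A}).toReal)
    -- a bounded measurable non-negative solution of the fixpoint equation
    (f : E → ℝ) (hfm : Measurable f) (hf0 : ∀ x, 0 ≤ f x)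
    (hfb : ∃ C, ∀ x, |f x| ≤ C)
    (hffix : ∀ x, f x = A.indicator 1 x + Aᶜ.indicator 1 x * ∫ y, f y ∂(P x)) :
    ∀ x, v x ≤ f x :=
  stmt_4_general μ ξ hξmeas hξindep hξid F hF P hP A hA v hv f hfm hf0 hfb hffix
end
end

section
/- Suppose there exists m ∈ ℕ and δ_m > 0 such that inf_{x∈E} P_x(τ_{K∪L} ≤ m) ≥ δ_m. Then P_x(τ_{K∪L} < ∞) = 1 for all x ∈ E, and the reach-avoid value functions satisfy 0 ≤ w(x;K^c,L) − w_n(x;K^c,L) ≤ (m/δ_m)(1−δ_m)^{⌊n/m⌋} for all x ∈ E and n ∈ ℕ. -/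
/-!
Write `T x n = {τ_{K∪L} > n}`. The hypothesis says `P_y(T y m) ≤ 1 - δ` for every state `y`.
Since the noise after time `N` is independent of the path up to time `N` and has the same law as
the whole noise sequence, the process restarted at time `N` from `X_N` is again the process,
so `P_x(T x (N + m)) ≤ (1 - δ) P_x(T x N)` and hence `P_x(T x (j m)) ≤ (1 - δ)^j`.
Letting `j → ∞` gives `τ_{K∪L} < ∞` a.s., and `w - w_n ≤ P_x(τ_{K∪L} > n) ≤ (1 - δ)^⌊n/m⌋`
because a path that reaches `L` before `K` after time `n` has not met `K ∪ L` by time `n`.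
-/

open MeasureTheory ProbabilityTheory Filter
open scoped ENNReal

noncomputable section

theorem ProbabilityTheory.IndepFun.measure_inter_preimage_le_mul {Ω α β : Type*}
    [MeasurableSpace Ω] [MeasurableSpace α] [MeasurableSpace β] {μ : Measure Ω}
    [IsFiniteMeasure μ] {X : Ω → α} {Y : Ω → β} (hXY : IndepFun X Y μ) (hX : Measurable X)
    (hY : Measurable Y) {A : Set α} (hA : MeasurableSet A) {C : Set (α × β)}
    (hC : MeasurableSet C) {c : ℝ≥0∞} (hc : ∀ a ∈ A, μ (Y ⁻¹' (Prod.mk a ⁻¹' C)) ≤ c) :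
    μ (X ⁻¹' A ∩ (fun ω ↦ (X ω, Y ω)) ⁻¹' C) ≤ c * μ (X ⁻¹' A) := by
  have hAC : MeasurableSet (Prod.fst ⁻¹' A ∩ C) := (measurable_fst hA).inter hC
  have hslice : ∀ a, μ.map Y (Prod.mk a ⁻¹' (Prod.fst ⁻¹' A ∩ C)) ≤ A.indicator (fun _ ↦ c) a := by
    intro a
    by_cases ha : a ∈ A
    · have : Prod.mk a ⁻¹' (Prod.fst ⁻¹' A ∩ C) = Prod.mk a ⁻¹' C := by ext; simp [ha]
      rw [Set.indicator_of_mem ha, this, Measure.map_apply hY (measurable_prodMk_left hC)]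
      exact hc a ha
    · have : Prod.mk a ⁻¹' (Prod.fst ⁻¹' A ∩ C) = ∅ := by ext; simp [ha]
      simp [this, ha]
  calc μ (X ⁻¹' A ∩ (fun ω ↦ (X ω, Y ω)) ⁻¹' C)
      = ((μ.map X).prod (μ.map Y)) (Prod.fst ⁻¹' A ∩ C) := by
        rw [← hXY.map_prod_eq_prod_map_map hX.aemeasurable hY.aemeasurable,
          Measure.map_apply (hX.prodMk hY) hAC]
        rfl
    _ ≤ ∫⁻ a, A.indicator (fun _ ↦ c) a ∂(μ.map X) := by
        rw [Measure.prod_apply hAC]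
        exact lintegral_mono hslice
    _ = c * μ (X ⁻¹' A) := by
        rw [lintegral_indicator_const hA, Measure.map_apply hX hA]

theorem MeasureTheory.prob_compl_le_ofReal_one_sub {Ω : Type*} [MeasurableSpace Ω]
    {μ : Measure Ω} [IsProbabilityMeasure μ] {s : Set Ω} (hs : MeasurableSet s) {δ : ℝ}
    (h : δ ≤ μ.real s) : μ sᶜ ≤ ENNReal.ofReal (1 - δ) := by
  rw [← ofReal_measureReal, probReal_compl_eq_one_sub hs]
  exact ENNReal.ofReal_le_ofReal (by linarith)

section Trajectory

variable {E Ξ Ω : Type*} (F : E → Ξ → E)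

theorem traj_add (ξ : ℕ → Ω → Ξ) (x : E) (ω : Ω) (N k : ℕ) :
    traj F ξ x ω (N + k) = traj F (fun i ↦ ξ (N + i)) (traj F ξ x ω N) ω k := by
  induction k with
  | zero => rfl
  | succ k ih => exact congrArg₂ F ih rfl

theorem traj_eq_traj_coord (ξ : ℕ → Ω → Ξ) (x : E) (ω : Ω) (k : ℕ) :
    traj F ξ x ω k = traj F (fun i u ↦ u i) x (fun i ↦ ξ i ω) k := by
  induction k with
  | zero => rfl
  | succ k ih => exact congrArg₂ F ih rfl

/-- The event `{τ_S > n}` for the process started at `x`. -/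
def survivalSet (ξ : ℕ → Ω → Ξ) (S : Set E) (x : E) (n : ℕ) : Set Ω :=
  {ω | ∀ k ≤ n, traj F ξ x ω k ∉ S}

variable {F}

theorem measurable_traj [MeasurableSpace E] [MeasurableSpace Ξ] {mΩ : MeasurableSpace Ω}
    (hF : Measurable (Function.uncurry F)) {ξ : ℕ → Ω → Ξ} {k : ℕ}
    (hξ : ∀ n < k, Measurable (ξ n)) : Measurable fun p : E × Ω ↦ traj F ξ p.1 p.2 k := by
  induction k with
  | zero => exact measurable_fst
  | succ k ih =>
    exact hF.comp ((ih fun n hn ↦ hξ n (by omega)).prodMk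
      ((hξ k k.lt_succ_self).comp measurable_snd))

theorem survivalSet_anti (ξ : ℕ → Ω → Ξ) (S : Set E) (x : E) :
    Antitone (survivalSet F ξ S x) :=
  fun _ _ hab _ hω k hk ↦ hω k (hk.trans hab)

theorem survivalSet_eq_compl (ξ : ℕ → Ω → Ξ) (S : Set E) (x : E) (n : ℕ) :
    survivalSet F ξ S x n = {ω | ∃ k ≤ n, traj F ξ x ω k ∈ S}ᶜ := by
  ext
  simp [survivalSet]

theorem measurableSet_setOf_mem_survivalSet [MeasurableSpace E] [MeasurableSpace Ξ]
    [MeasurableSpace Ω] (hF : Measurable (Function.uncurry F)) {ξ : ℕ → Ω → Ξ}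
    (hξ : ∀ n, Measurable (ξ n)) {S : Set E} (hS : MeasurableSet S) (n : ℕ) :
    MeasurableSet {p : E × Ω | p.2 ∈ survivalSet F ξ S p.1 n} := by
  have : {p : E × Ω | p.2 ∈ survivalSet F ξ S p.1 n} =
      ⋂ k ∈ Set.Iic n, (fun p ↦ traj F ξ p.1 p.2 k) ⁻¹' Sᶜ := by
    ext; simp [survivalSet]
  rw [this]
  exact .biInter (Set.to_countable _) fun k _ ↦ measurable_traj hF (fun n _ ↦ hξ n) hS.compl

theorem measurableSet_survivalSet [MeasurableSpace E] [MeasurableSpace Ξ] [MeasurableSpace Ω]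
    (hF : Measurable (Function.uncurry F)) {ξ : ℕ → Ω → Ξ} (hξ : ∀ n, Measurable (ξ n))
    {S : Set E} (hS : MeasurableSet S) (x : E) (n : ℕ) :
    MeasurableSet (survivalSet F ξ S x n) :=
  measurable_prodMk_left (measurableSet_setOf_mem_survivalSet hF hξ hS n)

theorem survivalSet_add (ξ : ℕ → Ω → Ξ) (S : Set E) (x : E) (N m : ℕ) :
    survivalSet F ξ S x (N + m) = survivalSet F ξ S x N ∩
      {ω | ω ∈ survivalSet F (fun i ↦ ξ (N + i)) S (traj F ξ x ω N) m} := by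
  ext ω
  simp only [survivalSet, Set.mem_inter_iff, Set.mem_ofPred_eq, ← traj_add]
  refine ⟨fun h ↦ ⟨fun k hk ↦ h k (by omega), fun k hk ↦ h (N + k) (by omega)⟩,
    fun ⟨h₁, h₂⟩ k hk ↦ ?_⟩
  rcases le_or_gt k N with hkN | hNk
  · exact h₁ k hkN
  · simpa [Nat.add_sub_cancel' hNk.le] using h₂ (k - N) (by omega)

theorem preimage_survivalSet_coord (ξ : ℕ → Ω → Ξ) (S : Set E) (x : E) (n : ℕ) :
    (fun ω i ↦ ξ i ω) ⁻¹' survivalSet F (fun i u ↦ u i) S x n = survivalSet F ξ S x n := by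
  ext
  simp [survivalSet, ← traj_eq_traj_coord]

end Trajectory

section Noise

variable {Ξ Ω : Type*} [MeasurableSpace Ξ] [MeasurableSpace Ω] {μ : Measure Ω} {ξ : ℕ → Ω → Ξ}

theorem identDistrib_shift (hξindep : iIndepFun ξ μ)
    (hξid : ∀ n, IdentDistrib (ξ n) (ξ 0) μ μ) (N : ℕ) :
    IdentDistrib (fun ω i ↦ ξ (N + i) ω) (fun ω i ↦ ξ i ω) μ μ :=
  .pi (fun i ↦ (hξid (N + i)).trans (hξid i).symm) (hξindep.precomp (add_right_injective N))
    hξindep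

theorem indep_past_shift (hξmeas : ∀ n, Measurable (ξ n)) (hξindep : iIndepFun ξ μ) (N : ℕ) :
    Indep (⨆ i ∈ Set.Iio N, MeasurableSpace.comap (ξ i) ‹_›)
      (MeasurableSpace.comap (fun ω i ↦ ξ (N + i) ω) MeasurableSpace.pi) μ := by
  refine indep_of_indep_of_le_right
    (indep_iSup_of_disjoint (fun i ↦ (hξmeas i).comap_le) hξindep
      (Set.Iio_disjoint_Ici le_rfl)) ?_
  rw [← measurable_iff_comap_le]
  exact @measurable_pi_lambda _ _ _ (_) _ _ fun i ↦ Measurable.of_comap_le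
    (le_iSup₂_of_le (N + i) (by simp) le_rfl)

end Noise

theorem indepFun_traj_shift {E Ξ Ω : Type*} [MeasurableSpace E] [MeasurableSpace Ξ]
    [MeasurableSpace Ω] {μ : Measure Ω} {F : E → Ξ → E} (hF : Measurable (Function.uncurry F))
    {ξ : ℕ → Ω → Ξ} (hξmeas : ∀ n, Measurable (ξ n)) (hξindep : iIndepFun ξ μ) (x : E) (N : ℕ) :
    IndepFun (fun ω (k : Fin (N + 1)) ↦ traj F ξ x ω k) (fun ω i ↦ ξ (N + i) ω) μ := by
  rw [IndepFun_iff_Indep]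
  refine indep_of_indep_of_le_left (indep_past_shift hξmeas hξindep N) ?_
  rw [← measurable_iff_comap_le]
  refine @measurable_pi_lambda _ _ _ (_) _ _ fun k ↦ ?_
  have hpast : ∀ n < (k : ℕ),
      Measurable[⨆ i ∈ Set.Iio N, MeasurableSpace.comap (ξ i) ‹_›] (ξ n) := fun n hn ↦
    Measurable.of_comap_le (le_iSup₂_of_le n (by simp; omega) le_rfl)
  exact (measurable_traj hF hpast).comp measurable_prodMk_left

section Survival

variable {E Ξ Ω : Type*} [MeasurableSpace E] [MeasurableSpace Ξ] [MeasurableSpace Ω]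
  {μ : Measure Ω} [IsProbabilityMeasure μ] {F : E → Ξ → E} {ξ : ℕ → Ω → Ξ} {S : Set E}
  {m : ℕ} {c : ℝ≥0∞}

theorem measure_survivalSet_add_le (hF : Measurable (Function.uncurry F))
    (hξmeas : ∀ n, Measurable (ξ n)) (hξindep : iIndepFun ξ μ)
    (hξid : ∀ n, IdentDistrib (ξ n) (ξ 0) μ μ) (hS : MeasurableSet S)
    (hc : ∀ y, μ (survivalSet F ξ S y m) ≤ c) (x : E) (N : ℕ) :
    μ (survivalSet F ξ S x (N + m)) ≤ c * μ (survivalSet F ξ S x N) := by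
  set X : Ω → Fin (N + 1) → E := fun ω k ↦ traj F ξ x ω k
  set Y : Ω → ℕ → Ξ := fun ω i ↦ ξ (N + i) ω
  set A : Set (Fin (N + 1) → E) := Set.univ.pi fun _ ↦ Sᶜ
  set C : Set ((Fin (N + 1) → E) × (ℕ → Ξ)) :=
    {p | p.2 ∈ survivalSet F (fun i u ↦ u i) S (p.1 (Fin.last N)) m}
  have hXA : X ⁻¹' A = survivalSet F ξ S x N := by
    ext ω
    simp [X, A, survivalSet, Fin.forall_iff]
  have hXYC : X ⁻¹' A ∩ (fun ω ↦ (X ω, Y ω)) ⁻¹' C = survivalSet F ξ S x (N + m) := by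
    rw [hXA, survivalSet_add]
    congr 1
    ext ω
    exact Set.ext_iff.mp (preimage_survivalSet_coord (fun i ↦ ξ (N + i)) S (traj F ξ x ω N) m) ω
  have hXmeas : Measurable X := measurable_pi_lambda _ fun k ↦
    (measurable_traj hF fun n _ ↦ hξmeas n).comp measurable_prodMk_left
  have hYmeas : Measurable Y := measurable_pi_lambda _ fun i ↦ hξmeas (N + i)
  have hAmeas : MeasurableSet A := .univ_pi fun _ ↦ hS.compl
  have hCmeas : MeasurableSet C :=
    (measurableSet_setOf_mem_survivalSet hF measurable_pi_apply hS m).preimage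
      (f := fun p : (Fin (N + 1) → E) × (ℕ → Ξ) ↦ (p.1 (Fin.last N), p.2))
      (((measurable_pi_apply _).comp measurable_fst).prodMk measurable_snd)
  rw [← hXYC, ← hXA]
  refine (indepFun_traj_shift hF hξmeas hξindep x N).measure_inter_preimage_le_mul hXmeas
    hYmeas hAmeas hCmeas fun v _ ↦ ?_
  have hsurv := measurableSet_survivalSet hF measurable_pi_apply hS (v (Fin.last N)) m
  calc μ (Y ⁻¹' (Prod.mk v ⁻¹' C))
      = μ ((fun ω i ↦ ξ i ω) ⁻¹' survivalSet F (fun i u ↦ u i) S (v (Fin.last N)) m) :=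
        (identDistrib_shift hξindep hξid N).measure_mem_eq hsurv
    _ ≤ c := by rw [preimage_survivalSet_coord]; exact hc _

theorem measure_survivalSet_mul_le (hF : Measurable (Function.uncurry F))
    (hξmeas : ∀ n, Measurable (ξ n)) (hξindep : iIndepFun ξ μ)
    (hξid : ∀ n, IdentDistrib (ξ n) (ξ 0) μ μ) (hS : MeasurableSet S)
    (hc : ∀ y, μ (survivalSet F ξ S y m) ≤ c) (x : E) (j : ℕ) :
    μ (survivalSet F ξ S x (j * m)) ≤ c ^ j := by
  induction j with
  | zero => simpa using prob_le_one
  | succ j ih =>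
    rw [Nat.succ_mul, pow_succ']
    exact (measure_survivalSet_add_le hF hξmeas hξindep hξid hS hc x _).trans
      (mul_le_mul_right ih c)

theorem measure_eq_zero_of_subset_survivalSet (hF : Measurable (Function.uncurry F))
    (hξmeas : ∀ n, Measurable (ξ n)) (hξindep : iIndepFun ξ μ)
    (hξid : ∀ n, IdentDistrib (ξ n) (ξ 0) μ μ) (hS : MeasurableSet S)
    (hc : ∀ y, μ (survivalSet F ξ S y m) ≤ c) (hc1 : c < 1) {x : E} {s : Set Ω}
    (hs : ∀ j, s ⊆ survivalSet F ξ S x (j * m)) : μ s = 0 := by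
  refine le_antisymm (ge_of_tendsto' (ENNReal.tendsto_pow_atTop_nhds_zero_of_lt_one hc1)
    fun j ↦ ?_) bot_le
  exact (measure_mono (hs j)).trans (measure_survivalSet_mul_le hF hξmeas hξindep hξid hS hc x j)

theorem measure_exists_traj_mem_eq_one (hF : Measurable (Function.uncurry F))
    (hξmeas : ∀ n, Measurable (ξ n)) (hξindep : iIndepFun ξ μ)
    (hξid : ∀ n, IdentDistrib (ξ n) (ξ 0) μ μ) (hS : MeasurableSet S)
    (hc : ∀ y, μ (survivalSet F ξ S y m) ≤ c) (hc1 : c < 1) (x : E) :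
    μ {ω | ∃ k, traj F ξ x ω k ∈ S} = 1 := by
  have hmeas : MeasurableSet {ω | ∃ k, traj F ξ x ω k ∈ S} := by
    rw [show {ω | ∃ k, traj F ξ x ω k ∈ S} = ⋃ k, (traj F ξ x · k) ⁻¹' S by ext; simp]
    exact .iUnion fun k ↦
      hS.preimage ((measurable_traj hF fun n _ ↦ hξmeas n).comp measurable_prodMk_left)
  rw [← prob_compl_eq_zero_iff hmeas]
  refine measure_eq_zero_of_subset_survivalSet hF hξmeas hξindep hξid hS hc hc1 (x := x)
    fun j ω hω k _ hk ↦ hω ⟨k, hk⟩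

theorem measureReal_survivalSet_le (hF : Measurable (Function.uncurry F))
    (hξmeas : ∀ n, Measurable (ξ n)) (hξindep : iIndepFun ξ μ)
    (hξid : ∀ n, IdentDistrib (ξ n) (ξ 0) μ μ) (hS : MeasurableSet S) {δ : ℝ} (hδ : 0 < δ)
    (hδ1 : δ ≤ 1) (hc : ∀ y, μ (survivalSet F ξ S y m) ≤ ENNReal.ofReal (1 - δ)) (x : E) (n : ℕ) :
    μ.real (survivalSet F ξ S x n) ≤ (m / δ) * (1 - δ) ^ (n / m) := by
  have hc1 : ENNReal.ofReal (1 - δ) < 1 := by rw [ENNReal.ofReal_lt_one]; linarith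
  rcases Nat.eq_zero_or_pos m with rfl | hm
  · rw [measureReal_def, measure_eq_zero_of_subset_survivalSet hF hξmeas hξindep hξid hS hc hc1
      fun j ↦ survivalSet_anti ξ S x (by simp)]
    simp
  have hpow : μ (survivalSet F ξ S x n) ≤ ENNReal.ofReal ((1 - δ) ^ (n / m)) := by
    rw [ENNReal.ofReal_pow (by linarith)]
    exact (measure_mono (survivalSet_anti ξ S x (Nat.div_mul_le_self n m))).trans
      (measure_survivalSet_mul_le hF hξmeas hξindep hξid hS hc x _)
  have hmδ : 1 ≤ (m : ℝ) / δ := by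
    rw [one_le_div hδ]
    exact hδ1.trans (by exact_mod_cast hm)
  calc μ.real (survivalSet F ξ S x n) ≤ (1 - δ) ^ (n / m) :=
        ENNReal.toReal_le_of_le_ofReal (by positivity) hpow
    _ ≤ (m / δ) * (1 - δ) ^ (n / m) :=
        le_mul_of_one_le_left (pow_nonneg (by linarith) _) hmδ

end Survival

theorem setOf_reachAvoid_subset {E Ξ Ω : Type*} (F : E → Ξ → E) (ξ : ℕ → Ω → Ξ) (K L : Set E)
    (x : E) (n : ℕ) :
    {ω | ∃ k, traj F ξ x ω k ∈ L ∧ ∀ j < k, traj F ξ x ω j ∈ Kᶜ} ⊆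
      {ω | ∃ k ≤ n, traj F ξ x ω k ∈ L ∧ ∀ j < k, traj F ξ x ω j ∈ Kᶜ} ∪
        survivalSet F ξ (K ∪ L) x n := by
  rintro ω ⟨k, hkL, hkK⟩
  by_cases hω : ∃ k ≤ n, traj F ξ x ω k ∈ L ∧ ∀ j < k, traj F ξ x ω j ∈ Kᶜ
  · exact .inl hω
  refine .inr fun i hi hiKL ↦ ?_
  have hik : i < k := hi.trans_lt (not_le.1 fun hkn ↦ hω ⟨k, hkn, hkL, hkK⟩)
  rcases hiKL with hiK | hiL
  · exact hkK i hik hiK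
  · exact hω ⟨i, hi, hiL, fun j hj ↦ hkK j (hj.trans hik)⟩

theorem stmt_7_general
    {E Ξ Ω : Type*} [MeasurableSpace E]
    [MeasurableSpace Ξ] [MeasurableSpace Ω]
    (μ : Measure Ω) [IsProbabilityMeasure μ]
    (ξ : ℕ → Ω → Ξ) (hξmeas : ∀ n, Measurable (ξ n))
    (hξindep : iIndepFun ξ μ)
    (hξid : ∀ n, IdentDistrib (ξ n) (ξ 0) μ μ)
    (F : E → Ξ → E) (hF : Measurable (Function.uncurry F))
    (K L : Set E) (hK : MeasurableSet K) (hL : MeasurableSet L)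
    -- the finite-horizon reach-avoid probabilities `w_n x = P_x(τ_L < τ_K, τ_L ≤ n)`
    (wn : ℕ → E → ℝ)
    (hwn : ∀ n x, wn n x = (μ {ω | ∃ k ≤ n, traj F ξ x ω k ∈ L ∧
      ∀ j < k, traj F ξ x ω j ∈ Kᶜ}).toReal)
    -- the reach-avoid probability `w x = P_x(τ_L < τ_K, τ_L < ∞)`
    (w : E → ℝ)
    (hw : ∀ x, w x = (μ {ω | ∃ k, traj F ξ x ω k ∈ L ∧
      ∀ j < k, traj F ξ x ω j ∈ Kᶜ}).toReal)
    (m : ℕ) (δ : ℝ) (hδ : 0 < δ)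
    (hm : ∀ x, δ ≤ (μ {ω | ∃ k ≤ m, traj F ξ x ω k ∈ K ∪ L}).toReal) :
    (∀ x, μ {ω | ∃ k, traj F ξ x ω k ∈ K ∪ L} = 1) ∧
      ∀ x n, 0 ≤ w x - wn n x ∧
        w x - wn n x ≤ (m / δ) * (1 - δ) ^ (n / m) := by
  have hKL := hK.union hL
  have hc : ∀ y, μ (survivalSet F ξ (K ∪ L) y m) ≤ ENNReal.ofReal (1 - δ) := fun y ↦ by
    have hhit := (measurableSet_survivalSet hF hξmeas hKL y m).compl
    rw [survivalSet_eq_compl, compl_compl] at hhit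
    rw [survivalSet_eq_compl]
    exact prob_compl_le_ofReal_one_sub hhit (hm y)
  have hc1 : ENNReal.ofReal (1 - δ) < 1 := by rw [ENNReal.ofReal_lt_one]; linarith
  refine ⟨measure_exists_traj_mem_eq_one hF hξmeas hξindep hξid hKL hc hc1, fun x n ↦ ?_⟩
  have hδ1 : δ ≤ 1 := (hm x).trans measureReal_le_one
  have hsub := setOf_reachAvoid_subset F ξ K L x n
  rw [hw, hwn, ← measureReal_def, ← measureReal_def]
  refine ⟨sub_nonneg.2 (measureReal_mono fun ω ⟨k, _, hk⟩ ↦ ⟨k, hk⟩), ?_⟩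
  calc _ ≤ μ.real (survivalSet F ξ (K ∪ L) x n) := by
        linarith [(measureReal_mono (μ := μ) hsub).trans (measureReal_union_le _ _)]
    _ ≤ _ := measureReal_survivalSet_le hF hξmeas hξindep hξid hKL hδ hδ1 hc x n

/-- if for some `m` and `δ > 0` one has `inf_x P_x(τ_{K∪L} ≤ m) ≥ δ`, then
`P_x(τ_{K∪L} < ∞) = 1` for all `x`, and
`0 ≤ w x - w_n x ≤ (m/δ)(1-δ)^⌊n/m⌋` for all `x` and `n`. -/
theorem stmt_7
    {E Ξ Ω : Type*} [MeasurableSpace E] [StandardBorelSpace E]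
    [MeasurableSpace Ξ] [MeasurableSpace Ω]
    (μ : Measure Ω) [IsProbabilityMeasure μ]
    (ξ : ℕ → Ω → Ξ) (hξmeas : ∀ n, Measurable (ξ n))
    (hξindep : iIndepFun ξ μ)
    (hξid : ∀ n, IdentDistrib (ξ n) (ξ 0) μ μ)
    (F : E → Ξ → E) (hF : Measurable (Function.uncurry F))
    (K L : Set E) (hK : MeasurableSet K) (hL : MeasurableSet L)
    -- the finite-horizon reach-avoid probabilities `w_n x = P_x(τ_L < τ_K, τ_L ≤ n)`
    (wn : ℕ → E → ℝ)
    (hwn : ∀ n x, wn n x = (μ {ω | ∃ k ≤ n, traj F ξ x ω k ∈ L ∧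
      ∀ j < k, traj F ξ x ω j ∈ Kᶜ}).toReal)
    -- the reach-avoid probability `w x = P_x(τ_L < τ_K, τ_L < ∞)`
    (w : E → ℝ)
    (hw : ∀ x, w x = (μ {ω | ∃ k, traj F ξ x ω k ∈ L ∧
      ∀ j < k, traj F ξ x ω j ∈ Kᶜ}).toReal)
    (m : ℕ) (δ : ℝ) (hδ : 0 < δ)
    (hm : ∀ x, δ ≤ (μ {ω | ∃ k ≤ m, traj F ξ x ω k ∈ K ∪ L}).toReal) :
    (∀ x, μ {ω | ∃ k, traj F ξ x ω k ∈ K ∪ L} = 1) ∧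
      ∀ x n, 0 ≤ w x - wn n x ∧
        w x - wn n x ≤ (m / δ) * (1 - δ) ^ (n / m) :=
  stmt_7_general μ ξ hξmeas hξindep hξid F hF K L hK hL wn hwn w hw m δ hδ hm
end
end

section
/- For the risk model with interest Z_{n+1} = (Z_n + G_n)(1 + I_n) − C_n where I_n ≥ 0 almost surely, coupled with the corresponding Cramer-Lundberg process Ẑ_{n+1} = Ẑ_n + G_n − C_n started from the same z ≥ 0 and driven by the same (G_n, C_n): on the event that Ẑ stays non-negative up to time n, Ẑ_n ≤ Z_n; consequently the ruin probabilities satisfy ψ(z,i) ≤ ψ̂(z) for all z ≥ 0 and all initial interest rates i ≥ 0. -/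
open MeasureTheory ProbabilityTheory

/-- coupling the model with interest `Z_{n+1} = (Z_n + G_n)(1 + I_n) - C_n`
(I_n ≥ 0, I_{n+1} = α I_n + W_n) with the interest-free process `Ẑ_{n+1} = Ẑ_n + G_n - C_n`,
both started at `z ≥ 0`: on the event that `Ẑ` stays non-negative up to time `n`,
`Ẑ_n ≤ Z_n`; consequently `ψ(z,i) ≤ ψ̂(z)`. -/
theorem stmt_17
    {Ω : Type*} [MeasurableSpace Ω] (μ : Measure Ω) [IsProbabilityMeasure μ]
    (G C W : ℕ → Ω → ℝ)
    (hGmeas : ∀ n, Measurable (G n)) (hCmeas : ∀ n, Measurable (C n))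
    (hWmeas : ∀ n, Measurable (W n))
    (hG0 : ∀ n ω, 0 ≤ G n ω) (hC0 : ∀ n ω, 0 ≤ C n ω) (hW0 : ∀ n ω, 0 ≤ W n ω)
    (α : ℝ) (hα : 0 ≤ α) (hα1 : α < 1)
    (z i : ℝ) (hz : 0 ≤ z) (hi : 0 ≤ i)
    -- the interest-rate process
    (I : ℕ → Ω → ℝ) (hI0 : ∀ ω, I 0 ω = i)
    (hI : ∀ n ω, I (n + 1) ω = α * I n ω + W n ω)
    -- the risk process with interest
    (Z : ℕ → Ω → ℝ) (hZ0 : ∀ ω, Z 0 ω = z)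
    (hZ : ∀ n ω, Z (n + 1) ω = (Z n ω + G n ω) * (1 + I n ω) - C n ω)
    -- the corresponding Cramer-Lundberg process
    (Zhat : ℕ → Ω → ℝ) (hZhat0 : ∀ ω, Zhat 0 ω = z)
    (hZhat : ∀ n ω, Zhat (n + 1) ω = Zhat n ω + G n ω - C n ω) :
    (∀ ω n, (∀ j ≤ n, 0 ≤ Zhat j ω) → Zhat n ω ≤ Z n ω) ∧
      μ {ω | ∃ n, Z n ω < 0} ≤ μ {ω | ∃ n, Zhat n ω < 0} := by
  have hIpos : ∀ n ω, 0 ≤ I n ω := by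
    intro n
    induction n with
    | zero => intro ω; rw [hI0]; exact hi
    | succ n ih => intro ω; rw [hI]; nlinarith [ih ω, hW0 n ω]
  have key : ∀ ω n, (∀ j ≤ n, 0 ≤ Zhat j ω) → Zhat n ω ≤ Z n ω := by
    intro ω n
    induction n with
    | zero => intro _; rw [hZ0, hZhat0]
    | succ n ih =>
      intro h
      have h' : ∀ j ≤ n, 0 ≤ Zhat j ω := fun j hj => h j (hj.trans (Nat.le_succ n))
      have h1 : Zhat n ω ≤ Z n ω := ih h'
      have h2 : 0 ≤ Z n ω + G n ω := by
        have := h' n le_rfl; have := hG0 n ω; linarith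
      have h3 : Z n ω + G n ω ≤ (Z n ω + G n ω) * (1 + I n ω) := by
        nlinarith [hIpos n ω]
      rw [hZ, hZhat]
      have := hG0 n ω
      linarith
  refine ⟨key, measure_mono ?_⟩
  intro ω hω
  obtain ⟨n, hn⟩ := hω
  by_contra h
  simp only [Set.mem_setOf_eq, not_exists, not_lt] at h
  exact absurd ((h n).trans (key ω n fun j _ => h j)) (not_le.mpr hn)
end
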